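/- arXiv:1709.04939 — 4 statements merged into one kernel-verified Lean document; each statement's English description precedes it below -/
import Mathlib

section
/- Let Φ : [0,∞) → ℝ be a smooth solution of the 3-dimensional radial self-similar equation Δ_r Φ − (1/2)Λ_r Φ + Φ^p = 0, where Δ_r = ∂_r² + (2/r)∂_r and Λ_r = 2/(p−1) + r∂_r. For b > 0 define μ_b(z) = √(1+bz²) and Φ_b(r,z) = μ_b(z)^{−2/(p−1)} Φ(r/μ_b(z)). Then Φ_b satisfies (1/2) z ∂_z Φ_b = Δ_r Φ_b − (1/2)Λ_r Φ_b + Φ_b^p for all r ≥ 0 and z ∈ ℝ. -/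
open Real

/-- The reconnecting profile `Φ_b(r,z) = μ_b(z)^{-2/(p-1)} Φ(r/μ_b(z))`,
`μ_b(z) = √(1+bz²)`. -/
noncomputable def Phib (p b : ℝ) (Φ : ℝ → ℝ) (r z : ℝ) : ℝ :=
  (1 + b * z ^ 2) ^ (-(1 / (p - 1)) : ℝ) * Φ (r / Real.sqrt (1 + b * z ^ 2))

/-- If `Φ` solves the 3d radial self-similar equation
`Δ_r Φ - ½ Λ_r Φ + Φ^p = 0` (with `Δ_r = ∂_r² + (2/r)∂_r`, `Λ_r = 2/(p-1) + r∂_r`),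
then for every `b > 0` the profile `Φ_b` satisfies
`½ z ∂_z Φ_b = Δ_r Φ_b - ½ Λ_r Φ_b + Φ_b^p`. -/
theorem reconnecting_profile_equation
    (p b : ℝ) (hp : 1 < p) (hb : 0 < b)
    (Φ : ℝ → ℝ) (hΦ : ContDiff ℝ (⊤ : ℕ∞) Φ) (hΦpos : ∀ r, 0 < Φ r)
    (hΦ'0 : deriv Φ 0 = 0)
    (hode : ∀ r, 0 < r →
      deriv (deriv Φ) r + (2 / r) * deriv Φ r
        - (1 / 2) * ((2 / (p - 1)) * Φ r + r * deriv Φ r) + Φ r ^ p = 0) :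
    ∀ r z, 0 < r →
      (1 / 2) * z * deriv (fun w => Phib p b Φ r w) z
        = deriv (deriv (fun s => Phib p b Φ s z)) r
          + (2 / r) * deriv (fun s => Phib p b Φ s z) r
          - (1 / 2) * ((2 / (p - 1)) * Phib p b Φ r z
              + r * deriv (fun s => Phib p b Φ s z) r)
          + Phib p b Φ r z ^ p := by
  intro r z hr
  have hp1 : p - 1 ≠ 0 := sub_ne_zero.mpr (ne_of_gt hp)
  set c : ℝ := -(1 / (p - 1)) with hc
  have hm : (0:ℝ) < 1 + b * z ^ 2 := by positivity
  set m : ℝ := 1 + b * z ^ 2 with hmdef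
  set μ : ℝ := Real.sqrt m with hμdef
  have hμ : 0 < μ := Real.sqrt_pos.mpr hm
  have hμ2 : μ ^ 2 = m := Real.sq_sqrt hm.le
  set s : ℝ := r / μ with hsdef
  have hs : 0 < s := div_pos hr hμ
  have hrs : r = s * μ := by rw [hsdef, div_mul_cancel₀ r hμ.ne']
  have hΦd : Differentiable ℝ Φ := hΦ.differentiable (by simp)
  have hPhiInf : ContDiff ℝ ((⊤ : ℕ∞) : WithTop ℕ∞) Φ := hΦ.of_le (by simp)
  have hΦ'd : Differentiable ℝ (deriv Φ) :=
    (contDiff_infty_iff_deriv.mp hPhiInf).2.differentiable (by simp)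
  -- r-derivatives
  have hFr : ∀ x : ℝ, HasDerivAt (fun s => Phib p b Φ s z)
      (m ^ c * (deriv Φ (x / μ) * (1 / μ))) x := by
    intro x
    have h1 : HasDerivAt (fun s : ℝ => s / μ) (1 / μ) x := by
      simpa using (hasDerivAt_id x).div_const μ
    have h2 : HasDerivAt (fun s : ℝ => Φ (s / μ)) (deriv Φ (x / μ) * (1 / μ)) x :=
      (hΦd (x / μ)).hasDerivAt.comp x h1
    exact h2.const_mul (m ^ c)
  have hderiv_eq : deriv (fun s => Phib p b Φ s z)
      = fun x => m ^ c * (deriv Φ (x / μ) * (1 / μ)) := funext fun x => (hFr x).deriv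
  have hFr2 : HasDerivAt (fun x => m ^ c * (deriv Φ (x / μ) * (1 / μ)))
      (m ^ c * (deriv (deriv Φ) s * (1 / μ) * (1 / μ))) r := by
    have h1 : HasDerivAt (fun x : ℝ => x / μ) (1 / μ) r := by
      simpa using (hasDerivAt_id r).div_const μ
    have h2 : HasDerivAt (fun x : ℝ => deriv Φ (x / μ)) (deriv (deriv Φ) s * (1 / μ)) r :=
      HasDerivAt.comp (h := fun x : ℝ => x / μ) r (hΦ'd s).hasDerivAt h1
    exact (h2.mul_const (1 / μ)).const_mul (m ^ c)
  have hd1 : deriv (fun s => Phib p b Φ s z) r = m ^ c * (deriv Φ s * (1 / μ)) := (hFr r).deriv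
  have hd2 : deriv (deriv (fun s => Phib p b Φ s z)) r
      = m ^ c * (deriv (deriv Φ) s * (1 / μ) * (1 / μ)) := by
    rw [hderiv_eq]; exact hFr2.deriv
  -- z-derivative
  have h1 : HasDerivAt (fun w : ℝ => 1 + b * w ^ 2) (2 * b * z) z := by
    have := ((hasDerivAt_pow 2 z).const_mul b).const_add 1
    refine this.congr_deriv ?_
    push_cast; ring
  have hg : HasDerivAt (fun w : ℝ => (1 + b * w ^ 2) ^ c)
      ((2 * b * z) * c * m ^ (c - 1)) z := h1.rpow_const (Or.inl hm.ne')
  have hsq : HasDerivAt (fun w : ℝ => Real.sqrt (1 + b * w ^ 2))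
      ((2 * b * z) / (2 * μ)) z := h1.sqrt hm.ne'
  have hq : HasDerivAt (fun w : ℝ => r / Real.sqrt (1 + b * w ^ 2))
      ((0 * μ - r * ((2 * b * z) / (2 * μ))) / μ ^ 2) z :=
    (hasDerivAt_const z r).div hsq hμ.ne'
  have hΦq : HasDerivAt (fun w : ℝ => Φ (r / Real.sqrt (1 + b * w ^ 2)))
      (deriv Φ s * ((0 * μ - r * ((2 * b * z) / (2 * μ))) / μ ^ 2)) z :=
    (hΦd s).hasDerivAt.comp z hq
  have hdz : deriv (fun w => Phib p b Φ r w) z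
      = (2 * b * z) * c * m ^ (c - 1) * Φ s
        + m ^ c * (deriv Φ s * ((0 * μ - r * ((2 * b * z) / (2 * μ))) / μ ^ 2)) :=
    HasDerivAt.deriv (hg.mul hΦq)
  -- values
  have hPhib : Phib p b Φ r z = m ^ c * Φ s := rfl
  have hcp : c * p = c - 1 := by rw [hc]; field_simp; ring
  have hpow : Phib p b Φ r z ^ p = m ^ (c - 1) * Φ s ^ p := by
    rw [hPhib, Real.mul_rpow (Real.rpow_nonneg hm.le c) (hΦpos s).le,
      ← Real.rpow_mul hm.le, hcp]
  have hA : m ^ c = m ^ (c - 1) * m := by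
    rw [← Real.rpow_add_one hm.ne']; ring_nf
  have hΦ'' : deriv (deriv Φ) s
      = (1 / 2) * ((2 / (p - 1)) * Φ s + s * deriv Φ s) - (2 / s) * deriv Φ s - Φ s ^ p := by
    have := hode s hs; linarith
  have hbz : b * z ^ 2 = μ ^ 2 - 1 := by rw [hμ2, hmdef]; ring
  clear_value s μ m c
  have hμne : μ ≠ 0 := hμ.ne'
  have hsne : s ≠ 0 := hs.ne'
  have hd1' : deriv (fun s => Phib p b Φ s z) r = m ^ (c - 1) * μ * deriv Φ s := by
    rw [hd1, hA, ← hμ2]; field_simp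
  have hd2' : deriv (deriv (fun s => Phib p b Φ s z)) r
      = m ^ (c - 1) * deriv (deriv Φ) s := by
    rw [hd2, hA, ← hμ2]; field_simp
  have hdz' : (1 / 2) * z * deriv (fun w => Phib p b Φ r w) z
      = (μ ^ 2 - 1) * (c * (m ^ (c - 1)) * Φ s - s * (m ^ (c - 1)) * deriv Φ s / 2) := by
    rw [hdz, hrs, hA, ← hμ2, ← hbz]; field_simp; ring
  rw [hdz', hd2', hd1', hpow, hPhib, hΦ'', hA, hrs, hc, ← hμ2]
  field_simp
  ring
end

section
/- Suppose b : [s₀,∞) → (0,∞) is C¹ and satisfies |b_s + c₁b²| ≤ C/s³ with b(s₀) = 1/(c₁s₀), for constants c₁ > 0, C > 0. Then for s₀ sufficiently large, |−1/b(s) + c₁ s| ≤ √s for all s ≥ s₀, and in particular 1/(2c₁ s) < b(s) < 2/(c₁ s). -/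
/-!
Put `g s = c₁ s - 1/b(s)`, so that `g(s₀) = 0` and `g' = (b_s + c₁ b²)/b²`. As long as
`|g(s)| ≤ √s ≤ c₁ s`, we have `1/b(s) ≤ 2 c₁ s`, hence `|g'(s)| ≤ 4 C c₁² / s`; for `s₀` large
this is smaller than the derivative `1/(2√s)` of `√s - √s₀`, so neither `g` nor `-g` can
cross this barrier.
-/

open Real Set

theorem le_sqrt_sub_sqrt_of_deriv_le {f f' : ℝ → ℝ} {K a : ℝ} (ha : 0 < a) (hK : 2 * K < √a)
    (hf : ∀ x, a ≤ x → HasDerivAt f (f' x) x) (h0 : f a ≤ 0)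
    (hf' : ∀ x, a ≤ x → f x = √x - √a → f' x ≤ K / x) :
    ∀ x, a ≤ x → f x ≤ √x - √a := by
  intro x hx
  have hB : ∀ y, a ≤ y → HasDerivAt (fun y => √y - √a) (1 / (2 * √y)) y := fun y hy =>
    (hasDerivAt_sqrt (ha.trans_le hy).ne').sub_const _
  refine image_le_of_deriv_right_lt_deriv_boundary' (B := fun y => √y - √a)
    (fun y hy => (hf y hy.1).continuousAt.continuousWithinAt)
    (fun y hy => (hf y hy.1).hasDerivWithinAt) (by simpa using h0)
    (fun y hy => (hB y hy.1).continuousAt.continuousWithinAt)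
    (fun y hy => (hB y hy.1).hasDerivWithinAt) (fun y hy hfy => ?_) ⟨hx, le_rfl⟩
  have hy₀ : 0 < y := ha.trans_le hy.1
  calc f' y ≤ K / y := hf' y hy.1 hfy
    _ < √y / 2 / y := by gcongr; linarith [sqrt_le_sqrt hy.1]
    _ = 1 / (2 * √y) := by
      field_simp
      rw [sq_sqrt hy₀.le]

theorem hasDerivAt_const_mul_sub_inv {b : ℝ → ℝ} {b' c x : ℝ} (hb : HasDerivAt b b' x)
    (hbx : b x ≠ 0) :
    HasDerivAt (fun s => c * s - (b s)⁻¹) ((b' + c * b x ^ 2) / b x ^ 2) x := by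
  refine (((hasDerivAt_id' x).const_mul c).sub (hb.inv hbx)).congr_deriv ?_
  field_simp
  ring

theorem abs_div_sq_le {e b c C x : ℝ} (hx : 0 < x) (hb : 0 < b) (he : |e| ≤ C / x ^ 3)
    (hbinv : b⁻¹ ≤ 2 * c * x) : |e / b ^ 2| ≤ 4 * C * c ^ 2 / x := by
  have hbinv_sq : b⁻¹ ^ 2 ≤ (2 * c * x) ^ 2 := pow_le_pow_left₀ (by positivity) hbinv 2
  calc |e / b ^ 2| = |e| * b⁻¹ ^ 2 := by
        rw [abs_div, abs_of_pos (by positivity : (0 : ℝ) < b ^ 2), inv_pow, div_eq_mul_inv]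
    _ ≤ C / x ^ 3 * (2 * c * x) ^ 2 := mul_le_mul he hbinv_sq (by positivity) (by
        linarith [abs_nonneg e])
    _ = 4 * C * c ^ 2 / x := by field_simp; ring

theorem abs_const_mul_sub_inv_le {c₁ C s₀ : ℝ} {b : ℝ → ℝ} (hs₀ : 0 < s₀)
    (hK : 2 * (4 * C * c₁ ^ 2) < √s₀) (hsqrt : ∀ x, s₀ ≤ x → √x ≤ c₁ * x)
    (hb : Differentiable ℝ b) (hbpos : ∀ x, s₀ ≤ x → 0 < b x)
    (hode : ∀ x, s₀ ≤ x → |deriv b x + c₁ * b x ^ 2| ≤ C / x ^ 3) (hinit : (b s₀)⁻¹ = c₁ * s₀) :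
    ∀ x, s₀ ≤ x → |c₁ * x - (b x)⁻¹| ≤ √x - √s₀ := by
  set g : ℝ → ℝ := fun x => c₁ * x - (b x)⁻¹
  set g' : ℝ → ℝ := fun x => (deriv b x + c₁ * b x ^ 2) / b x ^ 2
  have hg : ∀ x, s₀ ≤ x → HasDerivAt g (g' x) x := fun x hx =>
    hasDerivAt_const_mul_sub_inv (hb x).hasDerivAt (hbpos x hx).ne'
  have hg0 : g s₀ = 0 := by simp only [g, hinit, sub_self]
  have hg' : ∀ x, s₀ ≤ x → |g x| ≤ √x - √s₀ → |g' x| ≤ 4 * C * c₁ ^ 2 / x := by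
    intro x hx hgx
    have hbinv : (b x)⁻¹ ≤ 2 * c₁ * x := by
      linarith [neg_abs_le (g x), hsqrt x hx, sqrt_nonneg s₀]
    exact abs_div_sq_le (hs₀.trans_le hx) (hbpos x hx) (hode x hx) hbinv
  have hbarrier : ∀ x, s₀ ≤ x → 0 ≤ √x - √s₀ := fun x hx => sub_nonneg.2 (sqrt_le_sqrt hx)
  have hupper := le_sqrt_sub_sqrt_of_deriv_le hs₀ hK hg hg0.le fun x hx hgx =>
    (le_abs_self _).trans (hg' x hx (by rw [hgx, abs_of_nonneg (hbarrier x hx)]))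
  have hlower := le_sqrt_sub_sqrt_of_deriv_le (f := fun x => -g x) hs₀ hK
    (fun x hx => (hg x hx).neg) (by rw [hg0, neg_zero]) fun x hx hgx =>
    (neg_le_abs _).trans (hg' x hx (by rw [← abs_neg, hgx, abs_of_nonneg (hbarrier x hx)]))
  exact fun x hx => abs_le.2 ⟨by linarith [hlower x hx], hupper x hx⟩

theorem two_mul_sqrt_lt_mul {c x : ℝ} (hc : 0 < c) (hx : 4 / c ^ 2 < x) : 2 * √x < c * x := by
  have hx0 : 0 < x := (by positivity : (0 : ℝ) < 4 / c ^ 2).trans hx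
  have h : 2 / c < √x := lt_sqrt_of_sq_lt (by rwa [div_pow, show (2 : ℝ) ^ 2 = 4 by norm_num])
  rw [div_lt_iff₀ hc] at h
  calc 2 * √x < √x * c * √x := by nlinarith [sqrt_pos.2 hx0]
    _ = c * x := by rw [mul_comm (√x) c, mul_assoc, mul_self_sqrt hx0.le]

theorem inv_bounds_of_abs_sub_inv_le {b c s : ℝ} (hb : 0 < b) (h : |c * s - b⁻¹| ≤ √s)
    (hs : 2 * √s < c * s) : 1 / (2 * c * s) < b ∧ b < 2 / (c * s) := by
  obtain ⟨h₁, h₂⟩ := abs_le.1 h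
  have hcs : 0 < c * s := by linarith [sqrt_nonneg s]
  constructor
  · rw [div_lt_iff₀ (by linarith), ← inv_mul_lt_iff₀ hb, mul_one]
    linarith [sqrt_nonneg s]
  · rw [lt_div_iff₀ hcs, ← lt_inv_mul_iff₀ hb]
    linarith

theorem b_parameter_law_general (c₁ C : ℝ) (hc₁ : 0 < c₁) :
    ∃ S₀ : ℝ, 0 < S₀ ∧
      ∀ s₀ : ℝ, S₀ ≤ s₀ →
      ∀ b : ℝ → ℝ, ContDiff ℝ 1 b →
        (∀ s, s₀ ≤ s → 0 < b s) →
        (∀ s, s₀ ≤ s → |deriv b s + c₁ * (b s) ^ 2| ≤ C / s ^ 3) →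
        b s₀ = 1 / (c₁ * s₀) →
        ∀ s, s₀ ≤ s →
          |(-(1 / b s)) + c₁ * s| ≤ Real.sqrt s
          ∧ 1 / (2 * c₁ * s) < b s ∧ b s < 2 / (c₁ * s) := by
  set K := 4 * C * c₁ ^ 2
  refine ⟨(2 * K) ^ 2 + 4 / c₁ ^ 2 + 1, by positivity, fun s₀ hS₀ b hb hbpos hode hinit s hs => ?_⟩
  have hc₁' : 0 < 4 / c₁ ^ 2 := by positivity
  have hs₀ : 0 < s₀ := by linarith [sq_nonneg (2 * K)]
  have hlarge : ∀ x, s₀ ≤ x → 2 * √x < c₁ * x := fun x hx =>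
    two_mul_sqrt_lt_mul hc₁ (by linarith [sq_nonneg (2 * K)])
  have hmain := abs_const_mul_sub_inv_le hs₀ (lt_sqrt_of_sq_lt (by linarith))
    (fun x hx => by linarith [hlarge x hx, sqrt_nonneg x]) (hb.differentiable one_ne_zero)
    hbpos hode (by rw [hinit, one_div, inv_inv]) s hs
  have hgs : |c₁ * s - (b s)⁻¹| ≤ √s := by linarith [sqrt_nonneg s₀]
  refine ⟨?_, inv_bounds_of_abs_sub_inv_le (hbpos s hs) hgs (hlarge s hs)⟩
  rwa [one_div, neg_add_eq_sub]

/-- If `b` is positive, `C¹`, satisfies `|b_s + c₁ b²| ≤ C/s³` on `[s₀,∞)` with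
`b(s₀) = 1/(c₁ s₀)`, then for `s₀` large enough,
`|-1/b(s) + c₁ s| ≤ √s` and `1/(2c₁ s) < b(s) < 2/(c₁ s)` for all `s ≥ s₀`. -/
theorem b_parameter_law (c₁ C : ℝ) (hc₁ : 0 < c₁) (hC : 0 < C) :
    ∃ S₀ : ℝ, 0 < S₀ ∧
      ∀ s₀ : ℝ, S₀ ≤ s₀ →
      ∀ b : ℝ → ℝ, ContDiff ℝ 1 b →
        (∀ s, s₀ ≤ s → 0 < b s) →
        (∀ s, s₀ ≤ s → |deriv b s + c₁ * (b s) ^ 2| ≤ C / s ^ 3) →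
        b s₀ = 1 / (c₁ * s₀) →
        ∀ s, s₀ ≤ s →
          |(-(1 / b s)) + c₁ * s| ≤ Real.sqrt s
          ∧ 1 / (2 * c₁ * s) < b s ∧ b s < 2 / (c₁ * s) :=
  b_parameter_law_general c₁ C hc₁
end

section
/- Suppose a : [s₀,s*] → ℝ^N is C¹, each component a_j satisfies |(a_j)_s + μ_j a_j| ≤ C s^{−n/2−1} with μ_j ≤ −c < 0, and at s = s* we have Σ_j a_j(s*)² = (s*)^{−n}. Then for s₀ sufficiently large (depending on c, C, n, N), d/ds [ s^n Σ_j a_j(s)² ] at s = s* is strictly positive; in fact it is at least c·s^{n}·Σ a_j(s*)² + O(s^{−1}) ≥ c/2. -/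
/-!
At the exit time `s^n Σ a_j² = 1`, and the derivative of `s^n Σ a_j²` is
`n s^{n-1} Σ a_j² + 2 s^n Σ a_j a_j'`. The first term is nonnegative. Since
`a_j' = -μ_j a_j + e_j` with `-μ_j ≥ c` and `|e_j| ≤ E := C s^{-n/2-1}`, AM–GM gives
`a_j a_j' ≥ (c/2) a_j² - E²/(2c)`, so the second term is at least
`c s^n Σ a_j² - N s^n E²/c = c - N C²/(c s²)`, which is `≥ c/2` once `s ≳ N C²/c²`.
-/

open Real

theorem mul_ge_half_mul_sq_sub_of_abs_add_mul_le {c μ x y E : ℝ} (hc : 0 < c) (hμ : μ ≤ -c)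
    (h : |y + μ * x| ≤ E) : c / 2 * x ^ 2 - E ^ 2 / (2 * c) ≤ x * y := by
  set z := y + μ * x
  have hz : z ^ 2 ≤ E ^ 2 := by
    simpa only [sq_abs] using pow_le_pow_left₀ (abs_nonneg z) h 2
  have amgm : -(c / 2 * x ^ 2) - z ^ 2 / (2 * c) ≤ x * z := by
    rw [neg_sub_left, neg_le, ← sub_nonneg]
    have : 0 ≤ (c * x + z) ^ 2 / (2 * c) := by positivity
    convert this using 1; field_simp; ring
  have hμx : c * x ^ 2 ≤ -μ * x ^ 2 := mul_le_mul_of_nonneg_right (by linarith) (sq_nonneg x)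
  have hxy : x * y = x * z - μ * x ^ 2 := by simp only [z]; ring
  have hzE : z ^ 2 / (2 * c) ≤ E ^ 2 / (2 * c) := by gcongr
  linarith

theorem sum_mul_ge_of_abs_add_mul_le {ι : Type*} [Fintype ι] {c E : ℝ} {μ x y : ι → ℝ}
    (hc : 0 < c) (hμ : ∀ j, μ j ≤ -c) (h : ∀ j, |y j + μ j * x j| ≤ E) :
    c / 2 * ∑ j, x j ^ 2 - Fintype.card ι * (E ^ 2 / (2 * c)) ≤ ∑ j, x j * y j := by
  rw [Finset.mul_sum, ← nsmul_eq_mul, ← Finset.card_univ, ← Finset.sum_const,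
    ← Finset.sum_sub_distrib]
  exact Finset.sum_le_sum fun j _ => mul_ge_half_mul_sq_sub_of_abs_add_mul_le hc (hμ j) (h j)

theorem hasDerivAt_pow_mul_sum_sq {ι : Type*} [Fintype ι] {a : ℝ → ι → ℝ} {a' : ι → ℝ}
    {s : ℝ} (n : ℕ) (ha : ∀ j, HasDerivAt (fun t => a t j) (a' j) s) :
    HasDerivAt (fun t => t ^ n * ∑ j, a t j ^ 2)
      (n * s ^ (n - 1) * ∑ j, a s j ^ 2 + 2 * s ^ n * ∑ j, a s j * a' j) s := by
  have hsum : HasDerivAt (fun t => ∑ j, a t j ^ 2) (∑ j, 2 * (a s j * a' j)) s :=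
    HasDerivAt.fun_sum fun j _ => by simpa [mul_assoc] using (ha j).fun_pow 2
  refine ((hasDerivAt_pow n s).mul hsum).congr_deriv ?_
  rw [← Finset.mul_sum]; ring

theorem pow_mul_rpow_neg_natCast {s : ℝ} (hs : 0 < s) (n : ℕ) :
    s ^ n * s ^ (-(n : ℝ)) = 1 := by
  rw [rpow_neg hs.le, rpow_natCast, mul_inv_cancel₀ (by positivity)]

theorem pow_mul_rpow_neg_half_sub_one_sq {s : ℝ} (hs : 0 < s) (n : ℕ) :
    s ^ n * (s ^ (-(n : ℝ) / 2 - 1)) ^ 2 = (s ^ 2)⁻¹ := by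
  rw [← rpow_natCast s n, ← rpow_natCast _ 2, ← rpow_mul hs.le, ← rpow_add hs,
    show (n : ℝ) + (-(n : ℝ) / 2 - 1) * (2 : ℕ) = -(2 : ℕ) by push_cast; ring, rpow_neg hs.le,
    rpow_natCast]

theorem two_pow_mul_exit_bound_eq {s c C K : ℝ} (hs : 0 < s) (hc : c ≠ 0) (n : ℕ) :
    2 * s ^ n * (c / 2 * s ^ (-(n : ℝ)) - K * ((C * s ^ (-(n : ℝ) / 2 - 1)) ^ 2 / (2 * c)))
      = c - K * C ^ 2 / (c * s ^ 2) := by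
  calc _ = c * (s ^ n * s ^ (-(n : ℝ)))
          - K * C ^ 2 * (s ^ n * (s ^ (-(n : ℝ) / 2 - 1)) ^ 2) / c := by
        rw [mul_pow]; field_simp
    _ = c - K * C ^ 2 / (c * s ^ 2) := by
        rw [pow_mul_rpow_neg_natCast hs, pow_mul_rpow_neg_half_sub_one_sq hs]; field_simp

theorem half_le_sub_div_mul_sq {c s K : ℝ} (hc : 0 < c) (hs : 1 ≤ s)
    (hK : 2 * K / c ^ 2 ≤ s) : c / 2 ≤ c - K / (c * s ^ 2) := by
  rw [div_le_iff₀ (by positivity)] at hK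
  have : K / (c * s ^ 2) ≤ c / 2 := by
    rw [div_le_iff₀ (by positivity)]
    nlinarith [mul_le_mul_of_nonneg_right hs (by positivity : 0 ≤ s * c ^ 2)]
  linarith

theorem brouwer_outgoing_flux_general (N n : ℕ) (c C : ℝ) (hc : 0 < c) :
    ∃ S₀ : ℝ, 0 < S₀ ∧
      ∀ s₀ sstar : ℝ, S₀ ≤ s₀ → s₀ ≤ sstar →
      ∀ (a : ℝ → Fin N → ℝ) (μ : Fin N → ℝ),
        (∀ j, μ j ≤ -c) →
        (∀ j, ContDiff ℝ 1 (fun s => a s j)) →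
        (∀ s, s₀ ≤ s → s ≤ sstar → ∀ j,
          |deriv (fun t => a t j) s + μ j * a s j| ≤ C * s ^ (-(n : ℝ) / 2 - 1)) →
        (∑ j, (a sstar j) ^ 2 = sstar ^ (-(n : ℝ))) →
        c / 2 ≤ deriv (fun s => s ^ n * ∑ j, (a s j) ^ 2) sstar
        ∧ 0 < deriv (fun s => s ^ n * ∑ j, (a s j) ^ 2) sstar := by
  refine ⟨max 1 (2 * (N * C ^ 2) / c ^ 2), by positivity, ?_⟩
  intro s₀ s hs₀ hs a μ hμ ha hde hexit
  have hs1 : 1 ≤ s := (le_max_left _ _).trans (hs₀.trans hs)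
  have hs_large : 2 * (N * C ^ 2) / c ^ 2 ≤ s := (le_max_right _ _).trans (hs₀.trans hs)
  have hflux := (hasDerivAt_pow_mul_sum_sq n fun j =>
    ((ha j).differentiable one_ne_zero s).hasDerivAt).deriv
  have hinner := mul_le_mul_of_nonneg_left (sum_mul_ge_of_abs_add_mul_le hc hμ (hde s hs le_rfl))
    (by positivity : (0 : ℝ) ≤ 2 * s ^ n)
  rw [Fintype.card_fin, hexit, two_pow_mul_exit_bound_eq (by positivity) hc.ne']
    at hinner
  have hflux_ge : c / 2 ≤ deriv (fun s => s ^ n * ∑ j, (a s j) ^ 2) s := by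
    have hfirst : 0 ≤ n * s ^ (n - 1) * ∑ j, a s j ^ 2 := by positivity
    rw [hflux]
    linarith [half_le_sub_div_mul_sq hc hs1 hs_large]
  exact ⟨hflux_ge, (half_pos hc).trans_le hflux_ge⟩

/-- Outgoing flux at the exit time: if each component of `a : [s₀,s*] → ℝ^N` satisfies
`|(a_j)_s + μ_j a_j| ≤ C s^{-n/2-1}` with `μ_j ≤ -c < 0`, and
`Σ_j a_j(s*)² = (s*)^{-n}`, then for `s₀` large enough the derivative of
`s ↦ s^n Σ_j a_j(s)²` at `s = s*` is at least `c/2`, in particular strictly positive. -/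
theorem brouwer_outgoing_flux (N n : ℕ) (c C : ℝ) (hc : 0 < c) (hC : 0 < C) :
    ∃ S₀ : ℝ, 0 < S₀ ∧
      ∀ s₀ sstar : ℝ, S₀ ≤ s₀ → s₀ ≤ sstar →
      ∀ (a : ℝ → Fin N → ℝ) (μ : Fin N → ℝ),
        (∀ j, μ j ≤ -c) →
        (∀ j, ContDiff ℝ 1 (fun s => a s j)) →
        (∀ s, s₀ ≤ s → s ≤ sstar → ∀ j,
          |deriv (fun t => a t j) s + μ j * a s j| ≤ C * s ^ (-(n : ℝ) / 2 - 1)) →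
        (∑ j, (a sstar j) ^ 2 = sstar ^ (-(n : ℝ))) →
        c / 2 ≤ deriv (fun s => s ^ n * ∑ j, (a s j) ^ 2) sstar
        ∧ 0 < deriv (fun s => s ^ n * ∑ j, (a s j) ^ 2) sstar :=
  brouwer_outgoing_flux_general N n c C hc
end

section
/- Suppose y : [s₀,∞) → [0,∞) is C¹ and satisfies y' + c y ≤ C σ^{−m} at each time σ ≥ s₀, with y(s₀) ≤ s₀^{−m'}, where c > 0, m' ≥ m ≥ 1. Then there is a constant C' (depending on c, C, m) such that y(s) ≤ C' s^{−m} for all s ≥ s₀, provided s₀ is large enough. -/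
/-!
Compare `y` with the barrier `b s = C' s^{-m}`. Its own decay `m C' s^{-m-1}` is at most
`c C' s^{-m} / 2` once `s ≥ 2m/c`, so for `C' ≥ 2C/c` it satisfies `b' + c b ≥ C s^{-m}`;
with `C' ≥ 1` and `s₀ ≥ 1` it also starts above `y`. Grönwall's inequality applied to `y - b`
then keeps `y` below `b`.
-/

open Real

theorem le_of_hasDerivAt_add_mul_le {y b y' b' : ℝ → ℝ} {c a : ℝ}
    (hy : ∀ x, a ≤ x → HasDerivAt y (y' x) x) (hb : ∀ x, a ≤ x → HasDerivAt b (b' x) x)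
    (hineq : ∀ x, a ≤ x → y' x + c * y x ≤ b' x + c * b x) (ha : y a ≤ b a) :
    ∀ x, a ≤ x → y x ≤ b x := by
  intro x hx
  have hderiv : ∀ t, a ≤ t → HasDerivAt (y - b) (y' t - b' t) t := fun t ht =>
    (hy t ht).sub (hb t ht)
  have hgronwall := le_gronwallBound_of_liminf_deriv_right_le (f := y - b) (f' := y' - b')
    (δ := 0) (K := -c) (ε := 0) (b := x)
    (fun t ht => (hderiv t ht.1).continuousAt.continuousWithinAt)
    (fun t ht _ hr => (hderiv t ht.1).hasDerivWithinAt.liminf_right_slope_le hr)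
    (sub_nonpos.mpr ha)
    (fun t ht => by simp only [Pi.sub_apply]; linarith [hineq t ht.1]) x ⟨hx, le_rfl⟩
  rw [gronwallBound_ε0_δ0] at hgronwall
  exact sub_nonpos.mp hgronwall

theorem mul_rpow_neg_le_barrier {c C K m s : ℝ} (hs : 0 < s) (hK : 0 ≤ K)
    (hms : 2 * m ≤ c * s) (hKC : 2 * C ≤ c * K) :
    C * s ^ (-m) ≤ K * (-m * s ^ (-m - 1)) + c * (K * s ^ (-m)) := by
  have hsm : 0 ≤ s ^ (-m) := rpow_nonneg hs.le _
  have hpow : s ^ (-m - 1) * s = s ^ (-m) := by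
    rw [← rpow_add_one hs.ne', sub_add_cancel]
  have hdecay : m * s ^ (-m - 1) ≤ c / 2 * s ^ (-m) := by
    rw [← hpow]
    nlinarith [rpow_nonneg hs.le (-m - 1)]
  nlinarith [mul_le_mul_of_nonneg_left hdecay hK]

theorem gronwall_polynomial_decay_general (c C m : ℝ) (hc : 0 < c) :
    ∃ C' : ℝ, 0 < C' ∧
      ∀ m' : ℝ, m ≤ m' →
      ∃ S₀ : ℝ, 0 < S₀ ∧
        ∀ s₀ : ℝ, S₀ ≤ s₀ →
        ∀ y : ℝ → ℝ, ContDiff ℝ 1 y →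
          (∀ s, s₀ ≤ s → 0 ≤ y s) →
          (∀ s, s₀ ≤ s → deriv y s + c * y s ≤ C * s ^ (-m)) →
          y s₀ ≤ s₀ ^ (-m') →
          ∀ s, s₀ ≤ s → y s ≤ C' * s ^ (-m) := by
  refine ⟨max 1 (2 * C / c), by positivity, fun m' hm' => ⟨max 1 (2 * m / c), by positivity, ?_⟩⟩
  intro s₀ hs₀ y hy _ hineq hinit
  have hs₀1 : 1 ≤ s₀ := le_of_max_le_left hs₀
  have hs₀0 : 0 < s₀ := one_pos.trans_le hs₀1
  have hC' : 2 * C ≤ c * max 1 (2 * C / c) := by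
    rw [mul_comm c, ← div_le_iff₀ hc]; exact le_max_right _ _
  have hms : ∀ x, s₀ ≤ x → 2 * m ≤ c * x := fun x hx => by
    rw [mul_comm c, ← div_le_iff₀ hc]; exact (le_max_right _ _).trans (hs₀.trans hx)
  refine le_of_hasDerivAt_add_mul_le
    (fun x _ => ((hy.differentiable one_ne_zero) x).hasDerivAt)
    (fun x hx => ((hasDerivAt_rpow_const (Or.inl (hs₀0.trans_le hx).ne')).const_mul _))
    (fun x hx => (hineq x hx).trans
      (mul_rpow_neg_le_barrier (hs₀0.trans_le hx) (by positivity) (hms x hx) hC')) ?_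
  calc y s₀ ≤ s₀ ^ (-m') := hinit
    _ ≤ s₀ ^ (-m) := rpow_le_rpow_of_exponent_le hs₀1 (neg_le_neg hm')
    _ ≤ max 1 (2 * C / c) * s₀ ^ (-m) :=
      le_mul_of_one_le_left (rpow_nonneg hs₀0.le _) (le_max_left _ _)

/-- Gronwall-type lemma: if `y ≥ 0` is `C¹` with `y' + c y ≤ C s^{-m}` on `[s₀,∞)` and
`y(s₀) ≤ s₀^{-m'}` with `m' ≥ m ≥ 1`, then `y(s) ≤ C' s^{-m}` for all `s ≥ s₀`, where
`C'` depends only on `c, C, m` and `s₀` is large enough. -/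
theorem gronwall_polynomial_decay (c C m : ℝ) (hc : 0 < c) (hC : 0 < C) (hm : 1 ≤ m) :
    ∃ C' : ℝ, 0 < C' ∧
      ∀ m' : ℝ, m ≤ m' →
      ∃ S₀ : ℝ, 0 < S₀ ∧
        ∀ s₀ : ℝ, S₀ ≤ s₀ →
        ∀ y : ℝ → ℝ, ContDiff ℝ 1 y →
          (∀ s, s₀ ≤ s → 0 ≤ y s) →
          (∀ s, s₀ ≤ s → deriv y s + c * y s ≤ C * s ^ (-m)) →
          y s₀ ≤ s₀ ^ (-m') →
          ∀ s, s₀ ≤ s → y s ≤ C' * s ^ (-m) :=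
  gronwall_polynomial_decay_general c C m hc
end
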